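/- A metric space X is coarsely doubling if and only if there is R > 0 and a function N : (0,∞) → ℕ such that any s-ball in X can be covered by at most N(s) balls of radius R. -/

import Mathlib

def CoarselyDoubling (X : Type*) [MetricSpace X] : Prop :=
  ∃ M : ℝ, 0 < M ∧ ∀ r : ℝ, M < r → ∃ n : ℕ, ∀ x : X, ∃ F : Finset X,
    F.card ≤ n ∧ Metric.ball x (2 * r) ⊆ ⋃ y ∈ F, Metric.ball y r

/-!
Covering numbers compose: if `s`-balls are uniformly covered by `t`-balls and `t`-balls by
`R`-balls, then `s`-balls are uniformly covered by `R`-balls. Iterating the doubling condition at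
a radius `r` above the threshold therefore covers `2ᵏ r`-balls, hence balls of any radius, by
boundedly many `r`-balls. Conversely, covering `2r`-balls by `R`-balls with `R < r` is stronger
than covering them by `r`-balls.
-/

open Metric

def BallsUniformlyCoverable (X : Type*) [MetricSpace X] (s R : ℝ) : Prop :=
  ∃ n : ℕ, ∀ x : X, ∃ F : Finset X, F.card ≤ n ∧ ball x s ⊆ ⋃ y ∈ F, ball y R

namespace BallsUniformlyCoverable

variable {X : Type*} [MetricSpace X]

theorem of_le {s R : ℝ} (h : s ≤ R) : BallsUniformlyCoverable X s R :=
  ⟨1, fun x => ⟨{x}, by simp, by simpa using ball_subset_ball h⟩⟩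

theorem mono {s s' R R' : ℝ} (h : BallsUniformlyCoverable X s R) (hs : s' ≤ s) (hR : R ≤ R') :
    BallsUniformlyCoverable X s' R' := by
  obtain ⟨n, hn⟩ := h
  refine ⟨n, fun x => ?_⟩
  obtain ⟨F, hF, hcover⟩ := hn x
  exact ⟨F, hF, (ball_subset_ball hs).trans <|
    hcover.trans <| Set.iUnion₂_mono fun y _ => ball_subset_ball hR⟩

theorem trans {s t R : ℝ} (hst : BallsUniformlyCoverable X s t)
    (htR : BallsUniformlyCoverable X t R) : BallsUniformlyCoverable X s R := by
  classical
  obtain ⟨n, hn⟩ := hst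
  obtain ⟨m, hm⟩ := htR
  choose G hG_card hG_cover using hm
  refine ⟨n * m, fun x => ?_⟩
  obtain ⟨F, hF_card, hF_cover⟩ := hn x
  refine ⟨F.biUnion G, ?_, fun z hz => ?_⟩
  · exact (Finset.card_biUnion_le_card_mul F G m fun y _ => hG_card y).trans
      (Nat.mul_le_mul_right m hF_card)
  · obtain ⟨y, hyF, hzy⟩ := Set.mem_iUnion₂.1 (hF_cover hz)
    obtain ⟨w, hwG, hzw⟩ := Set.mem_iUnion₂.1 (hG_cover y hzy)
    exact Set.mem_iUnion₂.2 ⟨w, Finset.mem_biUnion.2 ⟨y, hyF, hwG⟩, hzw⟩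

end BallsUniformlyCoverable

open BallsUniformlyCoverable

theorem ballsUniformlyCoverable_two_pow_mul {X : Type*} [MetricSpace X] {M r : ℝ}
    (hMr : M < r) (hM : 0 < M)
    (hdoubling : ∀ r' : ℝ, M < r' → BallsUniformlyCoverable X (2 * r') r') (k : ℕ) :
    BallsUniformlyCoverable X (2 ^ k * r) r := by
  induction k with
  | zero => simpa using of_le le_rfl
  | succ k ih =>
    have hMk : M < 2 ^ k * r := hMr.trans_le <|
      le_mul_of_one_le_left (hM.trans hMr).le (one_le_pow₀ one_le_two)
    rw [pow_succ', mul_assoc]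
    exact (hdoubling _ hMk).trans ih

theorem ballsUniformlyCoverable_of_doubling {X : Type*} [MetricSpace X]
    {M r : ℝ} (hM : 0 < M)
    (hdoubling : ∀ r' : ℝ, M < r' → BallsUniformlyCoverable X (2 * r') r')
    (hMr : M < r) (s : ℝ) : BallsUniformlyCoverable X s r := by
  obtain ⟨k, hk⟩ := pow_unbounded_of_one_lt (s / r) one_lt_two
  rw [div_lt_iff₀ (hM.trans hMr)] at hk
  exact (ballsUniformlyCoverable_two_pow_mul hMr hM hdoubling k).mono hk.le le_rfl

/-- Proposition 5.9: a metric space `X` is coarsely doubling if and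
only if there is `R > 0` and `N : (0,∞) → ℕ` such that any `s`-ball in `X` can be
covered by at most `N(s)` balls of radius `R`. -/
theorem stmt_15 {X : Type*} [MetricSpace X] :
    CoarselyDoubling X ↔
      ∃ R : ℝ, 0 < R ∧ ∃ N : ℝ → ℕ, ∀ s : ℝ, 0 < s → ∀ x : X, ∃ F : Finset X,
        F.card ≤ N s ∧ Metric.ball x s ⊆ ⋃ y ∈ F, Metric.ball y R := by
  constructor
  · rintro ⟨M, hM, hdoubling⟩
    have hcover : ∀ s, BallsUniformlyCoverable X s (2 * M) :=
      ballsUniformlyCoverable_of_doubling hM hdoubling (by linarith)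
    choose N hN using hcover
    exact ⟨2 * M, by linarith, N, fun s _ => hN s⟩
  · rintro ⟨R, hR, N, hN⟩
    refine ⟨R, hR, fun r hRr => ?_⟩
    have hcover : BallsUniformlyCoverable X (2 * r) R := ⟨N (2 * r), hN _ (by linarith)⟩
    exact hcover.mono le_rfl hRr.le
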